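/- Let n = 2m+1 be odd, let c, d be real parameters with p·q = c and p^n + q^n = 2d for complex p, q, and let W = p·Z_n + q·Z_n^{−1} where Z_n is the n-dimensional clock matrix. Then W satisfies the matrix identity W^n = 2d·I + ∑_{j=0}^{m−1} B_{m,j}·c^{m−j}·W^{2j+1}, with B_{m,j} = (−1)^{m−1−j}·(2m+1)/(2j+1)·binom(m+j, 2j). -/

import Mathlib

/-!
Write `x_k = p ω^k` and `y_k = q ω^{-k}`. Then `W` is diagonal with entries `x_k + y_k`, where
`x_k y_k = c` and `x_k^n + y_k^n = p^n + q^n = 2d` because `ω^n = 1`. The Dickson polynomial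
`D_n(X, c)` satisfies `D_n(x + y, x y) = x^n + y^n`, so `D_n(W, c) = 2d • 1`, and the identity is
the explicit expansion of `D_n` for odd `n`. That expansion comes from `D_n = E_n - c E_{n-2}`,
where the Dickson polynomials `E_k` of the second kind have binomial coefficients obeying Pascal's
rule; the coefficients combine to `B_{m,j}` by
`(2j+1) (C(m+j+1, 2j+1) + C(m+j, 2j+1)) = (2m+1) C(m+j, 2j)`.
-/

open Finset Polynomial Matrix

theorem Nat.choose_add_choose_mul_two_mul_add_one {m j : ℕ} (h : j ≤ m) :
    ((m + j + 1).choose (2 * j + 1) + (m + j).choose (2 * j + 1)) * (2 * j + 1) =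
      (2 * m + 1) * (m + j).choose (2 * j) := by
  have h₁ := Nat.add_one_mul_choose_eq (m + j) (2 * j)
  have h₂ := Nat.choose_succ_right_eq (m + j) (2 * j)
  rw [add_mul, ← h₁, h₂, show 2 * m + 1 = m + j + 1 + (m + j - 2 * j) by omega]
  ring

namespace Polynomial

variable {R : Type*} [CommRing R]

theorem dickson_one_eval_add (x y : R) : ∀ n, (dickson 1 (x * y) n).eval (x + y) = x ^ n + y ^ n
  | 0 => by simp only [pow_zero, dickson_zero]; norm_num
  | 1 => by simp only [eval_X, dickson_one, pow_one]
  | n + 2 => by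
    simp only [eval_sub, eval_mul, dickson_one_eval_add x y _, eval_X, dickson_add_two, eval_C]
    ring

theorem dickson_one_add_two_eq_dickson_two_sub (a : R) :
    ∀ n, dickson 1 a (n + 2) = dickson 2 a (n + 2) - C a * dickson 2 a n
  | 0 => by simp only [dickson_add_two, dickson_zero]; norm_num; ring
  | 1 => by simp only [dickson_add_two, dickson_one, dickson_zero]; norm_num; ring
  | n + 2 => by
    rw [dickson_add_two 1, dickson_one_add_two_eq_dickson_two_sub a n,
      dickson_one_add_two_eq_dickson_two_sub a (n + 1), dickson_add_two 2 a (n + 2),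
      dickson_add_two 2 a n]
    ring

noncomputable def dicksonTwoEven (a : R) (m : ℕ) : R[X] :=
  ∑ j ∈ range (m + 1), (-C a) ^ (m - j) * ((m + j).choose (2 * j) : R[X]) * X ^ (2 * j)

noncomputable def dicksonTwoOdd (a : R) (m : ℕ) : R[X] :=
  ∑ j ∈ range (m + 1),
    (-C a) ^ (m - j) * ((m + j + 1).choose (2 * j + 1) : R[X]) * X ^ (2 * j + 1)

theorem dicksonTwoEven_succ (a : R) (m : ℕ) :
    dicksonTwoEven a (m + 1) = X * dicksonTwoOdd a m - C a * dicksonTwoEven a m := by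
  set b : ℕ → R[X] := fun j =>
    (-C a) ^ (m + 1 - j) * ((m + j).choose (2 * j) : R[X]) * X ^ (2 * j)
  have hb : C a * dicksonTwoEven a m = -(∑ j ∈ range (m + 1), b (j + 1) + b 0) := by
    have hb_top : b (m + 1) = 0 := by
      simp [b, Nat.choose_eq_zero_of_lt (show m + (m + 1) < 2 * (m + 1) by omega)]
    rw [← sum_range_succ' b, sum_range_succ b, hb_top, add_zero, ← sum_neg_distrib,
      dicksonTwoEven, mul_sum]
    refine sum_congr rfl fun j hj => ?_
    simp only [b]
    rw [Nat.sub_add_comm (mem_range_succ_iff.mp hj), pow_succ]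
    ring
  rw [hb, sub_neg_eq_add, dicksonTwoEven, dicksonTwoOdd, mul_sum, sum_range_succ' _ (m + 1),
    ← add_assoc, ← sum_add_distrib]
  congr 1
  · refine sum_congr rfl fun j _ => ?_
    rw [show m + 1 + (j + 1) = m + j + 1 + 1 by ring, show 2 * (j + 1) = 2 * j + 1 + 1 by ring,
      Nat.choose_succ_succ' (m + j + 1) (2 * j + 1)]
    simp only [b, Nat.add_sub_add_right, show m + (j + 1) = m + j + 1 by ring,
      show 2 * (j + 1) = 2 * j + 1 + 1 by ring]
    push_cast
    ring
  · simp [b]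

theorem dicksonTwoOdd_succ (a : R) (m : ℕ) :
    dicksonTwoOdd a (m + 1) = X * dicksonTwoEven a (m + 1) - C a * dicksonTwoOdd a m := by
  set o : ℕ → R[X] := fun j =>
    (-C a) ^ (m + 1 - j) * ((m + j + 1).choose (2 * j + 1) : R[X]) * X ^ (2 * j + 1)
  have ho : C a * dicksonTwoOdd a m = -∑ j ∈ range (m + 2), o j := by
    have ho_top : o (m + 1) = 0 := by
      simp [o, Nat.choose_eq_zero_of_lt (show m + (m + 1) + 1 < 2 * (m + 1) + 1 by omega)]
    rw [sum_range_succ o, ho_top, add_zero, ← sum_neg_distrib, dicksonTwoOdd, mul_sum]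
    refine sum_congr rfl fun j hj => ?_
    simp only [o]
    rw [Nat.sub_add_comm (mem_range_succ_iff.mp hj), pow_succ]
    ring
  rw [ho, sub_neg_eq_add, dicksonTwoOdd, dicksonTwoEven, mul_sum, ← sum_add_distrib]
  refine sum_congr rfl fun j _ => ?_
  rw [show m + 1 + j + 1 = m + j + 1 + 1 by ring, Nat.choose_succ_succ' (m + j + 1) (2 * j)]
  simp only [o, show m + 1 + j = m + j + 1 by ring]
  push_cast
  ring

theorem dickson_two_two_mul_and_two_mul_add_one (a : R) (m : ℕ) :
    dickson 2 a (2 * m) = dicksonTwoEven a m ∧ dickson 2 a (2 * m + 1) = dicksonTwoOdd a m := by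
  induction m with
  | zero => simp [dicksonTwoEven, dicksonTwoOdd, dickson_zero]; norm_num
  | succ m ih =>
    have h_even : dickson 2 a (2 * (m + 1)) = dicksonTwoEven a (m + 1) := by
      rw [show 2 * (m + 1) = 2 * m + 2 by ring, dickson_add_two, ih.1, ih.2, dicksonTwoEven_succ]
    refine ⟨h_even, ?_⟩
    rw [show 2 * (m + 1) + 1 = 2 * m + 1 + 2 by ring, dickson_add_two,
      show 2 * m + 1 + 1 = 2 * (m + 1) by ring, h_even, ih.2, dicksonTwoOdd_succ]

theorem dickson_one_two_mul_add_one (a : R) :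
    ∀ m : ℕ, dickson 1 a (2 * m + 1) = X ^ (2 * m + 1) +
      ∑ j ∈ range m, (-C a) ^ (m - j) *
        (((m + j + 1).choose (2 * j + 1) + (m + j).choose (2 * j + 1) : ℕ) : R[X]) *
          X ^ (2 * j + 1)
  | 0 => by simp [dickson_one]
  | m + 1 => by
    rw [show 2 * (m + 1) + 1 = 2 * m + 1 + 2 by ring, dickson_one_add_two_eq_dickson_two_sub,
      show 2 * m + 1 + 2 = 2 * (m + 1) + 1 by ring,
      (dickson_two_two_mul_and_two_mul_add_one a (m + 1)).2,
      (dickson_two_two_mul_and_two_mul_add_one a m).2, dicksonTwoOdd, dicksonTwoOdd,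
      sum_range_succ, mul_sum]
    simp only [Nat.sub_self, pow_zero, one_mul, show m + 1 + (m + 1) + 1 = 2 * (m + 1) + 1 by ring,
      Nat.choose_self, Nat.cast_one]
    rw [add_comm, sub_eq_add_neg, ← sum_neg_distrib, add_assoc, ← sum_add_distrib]
    congr 1
    refine sum_congr rfl fun j hj => ?_
    rw [show m + 1 - j = m - j + 1 by have := mem_range_succ_iff.mp hj; omega, pow_succ,
      show m + 1 + j = m + j + 1 by ring]
    push_cast
    ring

theorem dickson_one_two_mul_add_one_eq_sub {K : Type*} [Field K] [CharZero K] (a : K) (m : ℕ) :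
    dickson 1 a (2 * m + 1) = X ^ (2 * m + 1) -
      ∑ j ∈ range m, C ((-1) ^ (m - 1 - j) * (2 * (m : K) + 1) / (2 * (j : K) + 1) *
        ((m + j).choose (2 * j) : K) * a ^ (m - j)) * X ^ (2 * j + 1) := by
  rw [dickson_one_two_mul_add_one, sub_eq_add_neg, ← sum_neg_distrib]
  congr 1
  refine sum_congr rfl fun j hj => ?_
  have hjm : j < m := mem_range.mp hj
  have hcoeff : (((m + j + 1).choose (2 * j + 1) + (m + j).choose (2 * j + 1) : ℕ) : K) =
      (2 * (m : K) + 1) / (2 * (j : K) + 1) * ((m + j).choose (2 * j) : K) := by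
    rw [div_mul_eq_mul_div, eq_div_iff (by exact_mod_cast (2 * j).succ_ne_zero)]
    exact_mod_cast Nat.choose_add_choose_mul_two_mul_add_one hjm.le
  rw [← map_natCast C, ← map_neg C, ← map_pow, ← map_mul, ← neg_mul, ← map_neg, hcoeff,
    show m - j = m - 1 - j + 1 by omega]
  congr 2
  ring

end Polynomial

namespace Matrix

variable {n : Type*} [Fintype n] [DecidableEq n]

theorem aeval_diagonal {R : Type*} [CommRing R] (v : n → R) (f : R[X]) :
    aeval (diagonal v) f = diagonal fun i => f.eval (v i) := by
  rw [← diagonalAlgHom_apply R, aeval_algHom_apply, aeval_pi_apply, diagonalAlgHom_apply]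
  simp only [coe_aeval_eq_eval]

theorem inv_diagonal_of_ne_zero {K : Type*} [Field K] {v : n → K} (hv : ∀ i, v i ≠ 0) :
    (diagonal v)⁻¹ = diagonal fun i => (v i)⁻¹ := by
  refine inv_eq_right_inv ?_
  rw [diagonal_mul_diagonal, ← diagonal_one]
  exact congrArg _ (funext fun i => mul_inv_cancel₀ (hv i))

end Matrix

theorem stmt_16 (m : ℕ) (c d : ℝ) (p q : ℂ)
    (hc : p * q = (c : ℂ)) (hd : p ^ (2 * m + 1) + q ^ (2 * m + 1) = 2 * (d : ℂ)) :
    let n : ℕ := 2 * m + 1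
    let ω : ℂ := Complex.exp (2 * Real.pi * Complex.I / n)
    let Z : Matrix (Fin n) (Fin n) ℂ := Matrix.diagonal fun j => ω ^ (j : ℕ)
    let W : Matrix (Fin n) (Fin n) ℂ := p • Z + q • Z⁻¹
    W ^ n =
      (2 * (d : ℂ)) • (1 : Matrix (Fin n) (Fin n) ℂ) +
        ∑ j ∈ Finset.range m,
          (((-1 : ℂ) ^ (m - 1 - j) * (2 * (m : ℂ) + 1) / (2 * (j : ℂ) + 1) *
            ((m + j).choose (2 * j) : ℂ)) * (c : ℂ) ^ (m - j)) • W ^ (2 * j + 1) := by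
  intro n ω Z W
  have hω : ω ^ n = 1 := (Complex.isPrimitiveRoot_exp n (by omega)).pow_eq_one
  have hω₀ : ω ≠ 0 := Complex.exp_ne_zero _
  set x : Fin n → ℂ := fun k => p * ω ^ (k : ℕ)
  set y : Fin n → ℂ := fun k => q * (ω ^ (k : ℕ))⁻¹
  have hW : W = diagonal fun k => x k + y k := by
    simp only [W, Z, inv_diagonal_of_ne_zero fun k => pow_ne_zero _ hω₀, ← diagonal_smul,
      diagonal_add]
    rfl
  have hxy (k : Fin n) : x k * y k = c := by
    simp only [x, y]
    field_simp
    exact hc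
  have hpow (k : Fin n) : x k ^ n + y k ^ n = 2 * d := by
    have hωk : (ω ^ (k : ℕ)) ^ n = 1 := by rw [← pow_mul, mul_comm, pow_mul, hω, one_pow]
    simp only [x, y, mul_pow, inv_pow, hωk, inv_one, mul_one]
    exact hd
  have hD : aeval W (dickson 1 (c : ℂ) n) = (2 * (d : ℂ)) • 1 := by
    rw [hW, aeval_diagonal, smul_one_eq_diagonal]
    exact congrArg _ (funext fun k => by rw [← hxy k, dickson_one_eval_add, hpow])
  rw [dickson_one_two_mul_add_one_eq_sub] at hD
  simp only [map_sub, map_sum, aeval_X_pow, C_mul_X_pow_eq_monomial, aeval_monomial,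
    ← Algebra.smul_def] at hD
  exact sub_eq_iff_eq_add.mp hD
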